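/- The function W̄₋₁ is increasing and strictly concave on (1, ∞), and its derivative satisfies W̄₋₁'(x) = (1 - 1/W̄₋₁(x))^{-1} for all x > 1. -/

import Mathlib

/-!
`W̄₋₁` is a left inverse on `(1, ∞)` of `f z = z - log z`, whose derivative `1 - 1/z` is positive
there. Hence `W̄₋₁` is strictly increasing and onto `(1, ∞)`, so continuous, and the inverse function
theorem gives `W̄₋₁' = (f' ∘ W̄₋₁)⁻¹ = (1 - 1/W̄₋₁)⁻¹`. Since `w ↦ (1 - 1/w)⁻¹` is strictly
decreasing on `(1, ∞)` and `W̄₋₁` is increasing, the derivative is strictly decreasing, which is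
strict concavity.
-/

open Real Set Filter

namespace Set.LeftInvOn

variable {α β : Type*} [LinearOrder α] [LinearOrder β] {f : β → α} {g : α → β} {s : Set α}
  {t : Set β}

theorem strictMonoOn (hfg : LeftInvOn f g s) (hf : StrictMonoOn f t) (hg : MapsTo g s t) :
    StrictMonoOn g s := fun x hx y hy hxy =>
  (hf.lt_iff_lt (hg hx) (hg hy)).1 (by rwa [hfg hx, hfg hy])

variable [TopologicalSpace α] [OrderTopology α] [TopologicalSpace β] [OrderTopology β]
  [DenselyOrdered β]

theorem continuousOn (hfg : LeftInvOn f g s) (hf : StrictMonoOn f t) (hg : MapsTo g s t)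
    (hfs : MapsTo f t s) (hs : IsOpen s) (ht : IsOpen t) : ContinuousOn g s := by
  have hgf : LeftInvOn g f t := hf.injOn.rightInvOn_of_leftInvOn hfg hfs hg
  have hsurj : SurjOn g s t := hgf.surjOn hfs
  intro x hx
  exact ((hfg.strictMonoOn hf hg).continuousAt_of_image_mem_nhds (hs.mem_nhds hx)
    (mem_of_superset (ht.mem_nhds (hg hx)) hsurj)).continuousWithinAt

end Set.LeftInvOn

theorem hasDerivAt_id_sub_log {z : ℝ} (hz : 0 < z) :
    HasDerivAt (fun z => z - log z) (1 - 1 / z) z := by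
  rw [one_div]
  exact (hasDerivAt_id' z).sub (hasDerivAt_log hz.ne')

theorem one_sub_one_div_pos {w : ℝ} (hw : 1 < w) : 0 < 1 - 1 / w := by
  rw [sub_pos, div_lt_one (one_pos.trans hw)]
  exact hw

theorem strictMonoOn_id_sub_log : StrictMonoOn (fun z : ℝ => z - log z) (Ici 1) := by
  refine strictMonoOn_of_deriv_pos (convex_Ici 1) (fun z hz => ?_) fun z hz => ?_
  · exact (hasDerivAt_id_sub_log (one_pos.trans_le hz)).continuousAt.continuousWithinAt
  · rw [interior_Ici] at hz
    rw [(hasDerivAt_id_sub_log (one_pos.trans hz)).deriv]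
    exact one_sub_one_div_pos hz

theorem mapsTo_id_sub_log_Ioi : MapsTo (fun z : ℝ => z - log z) (Ioi 1) (Ioi 1) := fun z hz => by
  simpa using strictMonoOn_id_sub_log self_mem_Ici (mem_Ici.2 (le_of_lt hz)) hz

theorem strictAntiOn_inv_one_sub_one_div : StrictAntiOn (fun w : ℝ => (1 - 1 / w)⁻¹) (Ioi 1) :=
  fun x hx y hy hxy => by
    have hlt : 1 / y < 1 / x := one_div_lt_one_div_of_lt (one_pos.trans hx) hxy
    exact inv_strictAnti₀ (one_sub_one_div_pos hx) (by linarith)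

/-- `W̄₋₁` is increasing and strictly concave on `(1, ∞)`, with derivative
`W̄₋₁'(x) = (1 - 1/W̄₋₁(x))⁻¹` for all `x > 1`. -/
theorem stmt_2 (W : ℝ → ℝ)
    (hW : ∀ x : ℝ, 1 ≤ x →
      1 ≤ W x ∧ W x - Real.log (W x) = x ∧ ∀ z : ℝ, 1 ≤ z → z - Real.log z = x → z ≤ W x) :
    StrictMonoOn W (Set.Ioi (1 : ℝ)) ∧
    StrictConcaveOn ℝ (Set.Ioi (1 : ℝ)) W ∧
    ∀ x : ℝ, 1 < x → HasDerivAt W (1 - 1 / W x)⁻¹ x := by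
  have hinv : LeftInvOn (fun z => z - log z) W (Ioi 1) := fun x hx => (hW x (le_of_lt hx)).2.1
  have hmaps : MapsTo W (Ioi 1) (Ioi 1) := fun x hx => by
    obtain ⟨hW1, hWx, -⟩ := hW x (le_of_lt hx)
    refine lt_of_le_of_ne hW1 fun h => ?_
    rw [← h, log_one, sub_zero] at hWx
    exact (ne_of_lt hx) hWx
  have hf := strictMonoOn_id_sub_log.mono Ioi_subset_Ici_self
  have hmono : StrictMonoOn W (Ioi 1) := hinv.strictMonoOn hf hmaps
  have hcont : ContinuousOn W (Ioi 1) :=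
    hinv.continuousOn hf hmaps mapsTo_id_sub_log_Ioi isOpen_Ioi isOpen_Ioi
  have hderiv : ∀ x : ℝ, 1 < x → HasDerivAt W (1 - 1 / W x)⁻¹ x := fun x hx =>
    (hasDerivAt_id_sub_log (one_pos.trans (hmaps hx))).of_local_left_inverse
      (hcont.continuousAt (Ioi_mem_nhds hx)) (one_sub_one_div_pos (hmaps hx)).ne'
      (eventually_of_mem (Ioi_mem_nhds hx) hinv)
  refine ⟨hmono, ?_, hderiv⟩
  refine StrictAntiOn.strictConcaveOn_of_deriv (convex_Ioi 1) hcont ?_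
  rw [interior_Ioi]
  exact (strictAntiOn_inv_one_sub_one_div.comp_strictMonoOn hmono hmaps).congr fun x hx =>
    (hderiv x hx).deriv.symm
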